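/- arXiv:2406.01723 — 5 statements merged into one kernel-verified Lean document; each statement's English description precedes it below -/
import Mathlib

section
/- Let λ > 0 and let P be an n×n real symmetric matrix with 0 ⪯ P ≺ λI. Let R be an m×m real symmetric positive definite matrix, B ∈ ℝ^{n×m}, and set Φ := B R⁻¹ Bᵀ − λ⁻¹ I. Then the matrix I + P^{1/2} Φ P^{1/2} is positive definite, the matrix I + P Φ is invertible, and (I + P Φ)⁻¹ P is symmetric positive semidefinite. Consequently, for every A ∈ ℝ^{n×n} and every n×n symmetric positive semidefinite matrix Q, the matrix Q + Aᵀ (I + P Φ)⁻¹ P A is symmetric positive semidefinite. -/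
open Matrix

/-- The symmetric positive semidefinite square root of a positive semidefinite
real matrix (junk value `0` on non-PSD matrices). -/
noncomputable def psdSqrt {n : ℕ} (M : Matrix (Fin n) (Fin n) ℝ) :
    Matrix (Fin n) (Fin n) ℝ :=
  open scoped Classical MatrixOrder in
  if h : M.PosSemidef then CFC.sqrt M else 0

lemma posDef_smul {n : ℕ} {M : Matrix (Fin n) (Fin n) ℝ} (hM : M.PosDef)
    {c : ℝ} (hc : 0 < c) : (c • M).PosDef := by
  refine ⟨?_, fun x hx => ?_⟩
  · show (c • M)ᴴ = c • M
    rw [conjTranspose_smul, hM.1.eq]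
    simp
  exact (hM.smul hc).2 hx

/-- well-posedness of the Riccati recursion under `0 ⪯ P ≺ λ I`. -/
theorem riccati_well_posed {n m : ℕ} (lam : ℝ) (hlam : 0 < lam)
    (P : Matrix (Fin n) (Fin n) ℝ) (hP : P.PosSemidef)
    (hPlam : (lam • (1 : Matrix (Fin n) (Fin n) ℝ) - P).PosDef)
    (R : Matrix (Fin m) (Fin m) ℝ) (hR : R.PosDef)
    (B : Matrix (Fin n) (Fin m) ℝ) :
    let Φ : Matrix (Fin n) (Fin n) ℝ :=
      B * R⁻¹ * Bᵀ - lam⁻¹ • (1 : Matrix (Fin n) (Fin n) ℝ)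
    ((1 : Matrix (Fin n) (Fin n) ℝ) + psdSqrt P * Φ * psdSqrt P).PosDef ∧
    IsUnit ((1 : Matrix (Fin n) (Fin n) ℝ) + P * Φ) ∧
    (((1 : Matrix (Fin n) (Fin n) ℝ) + P * Φ)⁻¹ * P).PosSemidef ∧
    ∀ (A : Matrix (Fin n) (Fin n) ℝ) (Q : Matrix (Fin n) (Fin n) ℝ),
      Q.PosSemidef →
      (Q + Aᵀ * (((1 : Matrix (Fin n) (Fin n) ℝ) + P * Φ)⁻¹ * P) * A).PosSemidef := by
  intro Φ
  set S : Matrix (Fin n) (Fin n) ℝ := psdSqrt P with hSdef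
  open scoped MatrixOrder in
  have hS : S = CFC.sqrt P := by simp [hSdef, psdSqrt, hP]
  open scoped MatrixOrder in
  have hSpsd : S.PosSemidef := by rw [hS]; exact Matrix.nonneg_iff_posSemidef.mp (CFC.sqrt_nonneg P)
  open scoped MatrixOrder in
  have hSS : S * S = P := by rw [hS]; exact CFC.sqrt_mul_sqrt_self P (Matrix.nonneg_iff_posSemidef.mpr hP)
  have hSsymm : Sᵀ = S := hSpsd.1
  -- Φ is symmetric
  have hΦsymm : Φᵀ = Φ := by
    have hRinv : R⁻¹ᵀ = R⁻¹ := hR.isHermitian.inv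
    simp [Φ, hRinv, Matrix.mul_assoc]
  -- Step 1: I + SΦS is PosDef
  have key : (1 : Matrix (Fin n) (Fin n) ℝ) + S * Φ * S
      = (S * (B * R⁻¹ * Bᵀ) * S) + ((1 : Matrix (Fin n) (Fin n) ℝ) - lam⁻¹ • P) := by
    simp only [Φ, Matrix.mul_sub, Matrix.sub_mul, Matrix.mul_smul, Matrix.smul_mul,
      Matrix.mul_one, hSS]
    abel
  have hPD1 : ((1 : Matrix (Fin n) (Fin n) ℝ) + S * Φ * S).PosDef := by
    rw [key]
    have h1 : (S * (B * R⁻¹ * Bᵀ) * S).PosSemidef := by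
      have hRinvPD : (R⁻¹).PosDef := hR.inv
      have h2 : (B * R⁻¹ * Bᵀ).PosSemidef := by
        have := hRinvPD.posSemidef.mul_mul_conjTranspose_same B
        simpa [Matrix.mul_assoc] using this
      have := h2.mul_mul_conjTranspose_same S
      simpa [hSsymm, Matrix.mul_assoc] using this
    have h3 : ((1 : Matrix (Fin n) (Fin n) ℝ) - lam⁻¹ • P).PosDef := by
      have := posDef_smul hPlam (inv_pos.mpr hlam)
      have heq : lam⁻¹ • (lam • (1 : Matrix (Fin n) (Fin n) ℝ) - P)
          = (1 : Matrix (Fin n) (Fin n) ℝ) - lam⁻¹ • P := by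
        rw [smul_sub, smul_smul, inv_mul_cancel₀ hlam.ne', one_smul]
      rwa [heq] at this
    exact Matrix.PosDef.posSemidef_add h1 h3
  -- Step 2: I + PΦ is a unit
  have hdet : ((1 : Matrix (Fin n) (Fin n) ℝ) + P * Φ).det ≠ 0 := by
    have : ((1 : Matrix (Fin n) (Fin n) ℝ) + P * Φ).det
        = ((1 : Matrix (Fin n) (Fin n) ℝ) + S * Φ * S).det := by
      rw [← hSS, Matrix.mul_assoc S S Φ, det_one_add_mul_comm, Matrix.mul_assoc]
    rw [this]
    exact hPD1.det_pos.ne'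
  have hUnit : IsUnit ((1 : Matrix (Fin n) (Fin n) ℝ) + P * Φ) :=
    (Matrix.isUnit_iff_isUnit_det _).mpr hdet.isUnit
  -- Step 3: (I + PΦ)⁻¹ P = S (I + SΦS)⁻¹ S
  have hMdet : ((1 : Matrix (Fin n) (Fin n) ℝ) + S * Φ * S).det ≠ 0 := hPD1.det_pos.ne'
  set M : Matrix (Fin n) (Fin n) ℝ := (1 : Matrix (Fin n) (Fin n) ℝ) + S * Φ * S with hMdef
  have hprod : ((1 : Matrix (Fin n) (Fin n) ℝ) + P * Φ) * (S * M⁻¹ * S) = P := by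
    have : ((1 : Matrix (Fin n) (Fin n) ℝ) + P * Φ) * (S * M⁻¹ * S)
        = S * (M * M⁻¹) * S := by
      rw [← hSS]
      simp only [hMdef, Matrix.add_mul, Matrix.mul_add, Matrix.one_mul, Matrix.mul_one]
      noncomm_ring
    rw [this, Matrix.mul_nonsing_inv _ hMdet.isUnit, Matrix.mul_one, hSS]
  have hinvP : ((1 : Matrix (Fin n) (Fin n) ℝ) + P * Φ)⁻¹ * P = S * M⁻¹ * S := by
    calc ((1 : Matrix (Fin n) (Fin n) ℝ) + P * Φ)⁻¹ * P
        = ((1 : Matrix (Fin n) (Fin n) ℝ) + P * Φ)⁻¹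
            * (((1 : Matrix (Fin n) (Fin n) ℝ) + P * Φ) * (S * M⁻¹ * S)) := by rw [hprod]
      _ = S * M⁻¹ * S := by
          rw [← Matrix.mul_assoc, Matrix.nonsing_inv_mul _ hdet.isUnit, Matrix.one_mul]
  have hPSD : (((1 : Matrix (Fin n) (Fin n) ℝ) + P * Φ)⁻¹ * P).PosSemidef := by
    rw [hinvP]
    have hMinv : (M⁻¹).PosSemidef := hPD1.inv.posSemidef
    have := hMinv.mul_mul_conjTranspose_same S
    simpa [hSsymm, Matrix.mul_assoc] using this
  refine ⟨hPD1, hUnit, hPSD, fun A Q hQ => ?_⟩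
  have := hPSD.conjTranspose_mul_mul_same A
  exact hQ.add (by simpa [Matrix.mul_assoc] using this)
end

section
/- Let λ > 0, let P be an n×n real symmetric matrix with 0 ⪯ P ≺ λI, let Q be an n×n symmetric positive semidefinite matrix, R an m×m symmetric positive definite matrix, A ∈ ℝ^{n×n}, B ∈ ℝ^{n×m}, and r, ŵ, x̄ ∈ ℝⁿ. Set Φ := B R⁻¹ Bᵀ − λ⁻¹ I, K := −R⁻¹ Bᵀ (I + PΦ)⁻¹ P A, L := −R⁻¹ Bᵀ (I + PΦ)⁻¹ (P ŵ + r), u* := K x̄ + L, H := (λI − P)⁻¹ P (A + B K), G := (λI − P)⁻¹ (P B L + r + λ ŵ), w* := H x̄ + G, and f(u, w) := x̄ᵀ Q x̄ + uᵀ R u + (A x̄ + B u + w)ᵀ P (A x̄ + B u + w) + 2 rᵀ (A x̄ + B u + w) − λ ‖w − ŵ‖₂². Define P⁺ := Q + Aᵀ (I + PΦ)⁻¹ P A, r⁺ := Aᵀ (I + PΦ)⁻¹ (r + P ŵ), and c := (2ŵ − Φ r)ᵀ (I + PΦ)⁻¹ r + ŵᵀ (I + PΦ)⁻¹ P ŵ.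 Then the saddle value satisfies f(u*, w*) = x̄ᵀ P⁺ x̄ + 2 (r⁺)ᵀ x̄ + c. -/
open Matrix

namespace SaddleAux

variable {n m : ℕ}

open scoped MatrixOrder

lemma dot_swap (M : Matrix (Fin n) (Fin m) ℝ) (u : Fin n → ℝ) (v : Fin m → ℝ) :
    u ⬝ᵥ (M *ᵥ v) = (Mᵀ *ᵥ u) ⬝ᵥ v := by
  rw [dotProduct_mulVec, mulVec_transpose]

lemma posDef_smul {M : Matrix (Fin n) (Fin n) ℝ} (hM : M.PosDef) {c : ℝ} (hc : 0 < c) :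
    (c • M).PosDef := by
  refine ⟨?_, fun x hx => ?_⟩
  · unfold Matrix.IsHermitian
    rw [conjTranspose_smul, hM.1]
    norm_num
  · exact (hM.smul hc).2 hx

lemma unit_det (lam : ℝ) (hlam : 0 < lam)
    (P : Matrix (Fin n) (Fin n) ℝ) (hP : P.PosSemidef)
    (hPlam : (lam • (1 : Matrix (Fin n) (Fin n) ℝ) - P).PosDef)
    (R : Matrix (Fin m) (Fin m) ℝ) (hR : R.PosDef) (B : Matrix (Fin n) (Fin m) ℝ) :
    IsUnit ((1 : Matrix (Fin n) (Fin n) ℝ)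
      + P * (B * R⁻¹ * Bᵀ - lam⁻¹ • (1 : Matrix (Fin n) (Fin n) ℝ))).det := by
  set V : Matrix (Fin n) (Fin n) ℝ := lam • (1 : Matrix (Fin n) (Fin n) ℝ) - P with hVdef
  have hVdet : IsUnit V.det := isUnit_iff_ne_zero.mpr hPlam.det_pos.ne'
  set S : Matrix (Fin n) (Fin n) ℝ := V⁻¹ with hSdef
  have hVS : V * S = 1 := mul_nonsing_inv _ hVdet
  have hSV : S * V = 1 := nonsing_inv_mul _ hVdet
  have hVT : Vᵀ = V := by
    rw [← conjTranspose_eq_transpose_of_trivial]; exact hPlam.1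
  have hST : Sᵀ = S := by rw [hSdef, transpose_nonsing_inv, hVT]
  set E : Matrix (Fin n) (Fin n) ℝ := CFC.sqrt P with hEdef
  have hEE : E * E = P := CFC.sqrt_mul_sqrt_self P hP.nonneg
  have hET : Eᵀ = E := by
    rw [← conjTranspose_eq_transpose_of_trivial]; exact (CFC.sqrt_nonneg P).posSemidef.1
  have hEP : E * P = P * E := by rw [← hEE, ← mul_assoc]
  have hEV : E * V = V * E := by
    rw [hVdef, Matrix.mul_sub, Matrix.sub_mul, mul_smul_comm, smul_mul_assoc, mul_one,
      one_mul, hEP]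
  -- lam • V is PosDef
  have hlamV : (lam • V).PosDef := posDef_smul hPlam hlam
  -- P * (lam • V) is PosSemidef  via  E * (lam • V) * Eᴴ
  have hPVps : (lam • (P * V)).PosSemidef := by
    have h1 : lam • (P * V) = E * (lam • V) * Eᴴ := by
      rw [conjTranspose_eq_transpose_of_trivial, hET, ← hEE, mul_smul_comm, smul_mul_assoc,
        mul_assoc, hEV, ← mul_assoc, ← hEV]
    rw [h1]
    exact hlamV.posSemidef.mul_mul_conjTranspose_same E
  -- F := lam • (S * P) is PosSemidef via S * (lam • (P * V)) * Sᴴ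
  set F : Matrix (Fin n) (Fin n) ℝ := lam • (S * P) with hFdef
  have hFps : F.PosSemidef := by
    have h2 : F = S * (lam • (P * V)) * Sᴴ := by
      rw [conjTranspose_eq_transpose_of_trivial, hST, hFdef, mul_smul_comm, smul_mul_assoc,
        ← mul_assoc, mul_assoc (S * P) V S, hVS, mul_one]
    rw [h2]
    exact hPVps.mul_mul_conjTranspose_same S
  set D : Matrix (Fin n) (Fin n) ℝ := B * R⁻¹ * Bᵀ with hDdef
  have hDps : D.PosSemidef := by
    have h3 : D = B * R⁻¹ * Bᴴ := by
      rw [conjTranspose_eq_transpose_of_trivial]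
    rw [h3]
    exact hR.inv.posSemidef.mul_mul_conjTranspose_same B
  -- factorization
  have e1 : (lam⁻¹ • V) * (F * D) = P * D := by
    simp only [hFdef, smul_mul_assoc, mul_smul_comm, smul_smul,
      inv_mul_cancel₀ hlam.ne', mul_inv_cancel₀ hlam.ne', one_smul]
    rw [← mul_assoc, ← mul_assoc, hVS, one_mul]
  have e2 : lam⁻¹ • V = 1 - lam⁻¹ • P := by
    rw [hVdef, smul_sub, smul_smul, inv_mul_cancel₀ hlam.ne', one_smul]
  have hfac : (1 : Matrix (Fin n) (Fin n) ℝ) + P * (D - lam⁻¹ • 1)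
      = (lam⁻¹ • V) * (1 + F * D) := by
    rw [Matrix.mul_add, mul_one, e1, e2, Matrix.mul_sub, mul_smul_comm, mul_one]
    abel
  set G : Matrix (Fin n) (Fin n) ℝ := CFC.sqrt F with hGdef
  have hGG : G * G = F := CFC.sqrt_mul_sqrt_self F hFps.nonneg
  have hGH : Gᴴ = G := (CFC.sqrt_nonneg F).posSemidef.1
  have hdet2 : (0:ℝ) < (1 + F * D).det := by
    have h4 : ((1 : Matrix (Fin n) (Fin n) ℝ) + F * D).det
        = ((1 : Matrix (Fin n) (Fin n) ℝ) + G * D * G).det := by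
      rw [← hGG, mul_assoc G G D, det_one_add_mul_comm]
    rw [h4]
    have h5 : (G * D * G).PosSemidef := by
      have h6 := hDps.mul_mul_conjTranspose_same G
      rwa [hGH] at h6
    exact (Matrix.PosDef.one.add_posSemidef h5).det_pos
  rw [hfac, det_mul]
  have hd1 : (0:ℝ) < (lam⁻¹ • V).det := (posDef_smul hPlam (inv_pos.mpr hlam)).det_pos
  exact (isUnit_iff_ne_zero.mpr hd1.ne').mul (isUnit_iff_ne_zero.mpr hdet2.ne')


end SaddleAux

open SaddleAux

/-- the saddle value of the per-stage penalized minimax problem equals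
`x̄ᵀP⁺x̄ + 2(r⁺)ᵀx̄ + c` with the Riccati recursion coefficients of Theorem 1. -/
theorem saddle_value_riccati {n m : ℕ} (lam : ℝ) (hlam : 0 < lam)
    (P : Matrix (Fin n) (Fin n) ℝ) (hP : P.PosSemidef)
    (hPlam : (lam • (1 : Matrix (Fin n) (Fin n) ℝ) - P).PosDef)
    (Q : Matrix (Fin n) (Fin n) ℝ) (hQ : Q.PosSemidef)
    (R : Matrix (Fin m) (Fin m) ℝ) (hR : R.PosDef)
    (A : Matrix (Fin n) (Fin n) ℝ) (B : Matrix (Fin n) (Fin m) ℝ)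
    (r what xbar : Fin n → ℝ) :
    let Φ : Matrix (Fin n) (Fin n) ℝ :=
      B * R⁻¹ * Bᵀ - lam⁻¹ • (1 : Matrix (Fin n) (Fin n) ℝ)
    let K : Matrix (Fin m) (Fin n) ℝ :=
      -(R⁻¹ * Bᵀ * ((1 : Matrix (Fin n) (Fin n) ℝ) + P * Φ)⁻¹ * P * A)
    let L : Fin m → ℝ :=
      -((R⁻¹ * Bᵀ * ((1 : Matrix (Fin n) (Fin n) ℝ) + P * Φ)⁻¹) *ᵥ (P *ᵥ what + r))
    let ustar : Fin m → ℝ := K *ᵥ xbar + L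
    let H : Matrix (Fin n) (Fin n) ℝ :=
      (lam • (1 : Matrix (Fin n) (Fin n) ℝ) - P)⁻¹ * P * (A + B * K)
    let G : Fin n → ℝ :=
      (lam • (1 : Matrix (Fin n) (Fin n) ℝ) - P)⁻¹ *ᵥ ((P * B) *ᵥ L + r + lam • what)
    let wstar : Fin n → ℝ := H *ᵥ xbar + G
    let f : (Fin m → ℝ) → (Fin n → ℝ) → ℝ := fun u w =>
      xbar ⬝ᵥ (Q *ᵥ xbar) + u ⬝ᵥ (R *ᵥ u)
        + (A *ᵥ xbar + B *ᵥ u + w) ⬝ᵥ (P *ᵥ (A *ᵥ xbar + B *ᵥ u + w))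
        + 2 * (r ⬝ᵥ (A *ᵥ xbar + B *ᵥ u + w))
        - lam * ((w - what) ⬝ᵥ (w - what))
    let Pplus : Matrix (Fin n) (Fin n) ℝ :=
      Q + Aᵀ * ((1 : Matrix (Fin n) (Fin n) ℝ) + P * Φ)⁻¹ * P * A
    let rplus : Fin n → ℝ :=
      (Aᵀ * ((1 : Matrix (Fin n) (Fin n) ℝ) + P * Φ)⁻¹) *ᵥ (r + P *ᵥ what)
    let c : ℝ :=
      ((2 : ℝ) • what - Φ *ᵥ r) ⬝ᵥ (((1 : Matrix (Fin n) (Fin n) ℝ) + P * Φ)⁻¹ *ᵥ r)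
        + what ⬝ᵥ ((((1 : Matrix (Fin n) (Fin n) ℝ) + P * Φ)⁻¹ * P) *ᵥ what)
    f ustar wstar = xbar ⬝ᵥ (Pplus *ᵥ xbar) + 2 * (rplus ⬝ᵥ xbar) + c := by
  intro Φ K L ustar H G wstar f Pplus rplus c
  -- definitional equations
  have hΦ : Φ = B * R⁻¹ * Bᵀ - lam⁻¹ • (1 : Matrix (Fin n) (Fin n) ℝ) := rfl
  have hK : K = -(R⁻¹ * Bᵀ * ((1 : Matrix (Fin n) (Fin n) ℝ) + P * Φ)⁻¹ * P * A) := rfl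
  have hL : L = -((R⁻¹ * Bᵀ * ((1 : Matrix (Fin n) (Fin n) ℝ) + P * Φ)⁻¹) *ᵥ (P *ᵥ what + r)) :=
    rfl
  have hust : ustar = K *ᵥ xbar + L := rfl
  have hH : H = (lam • (1 : Matrix (Fin n) (Fin n) ℝ) - P)⁻¹ * P * (A + B * K) := rfl
  have hGd : G = (lam • (1 : Matrix (Fin n) (Fin n) ℝ) - P)⁻¹ *ᵥ
      ((P * B) *ᵥ L + r + lam • what) := rfl
  have hwst : wstar = H *ᵥ xbar + G := rfl
  have hPp : Pplus = Q + Aᵀ * ((1 : Matrix (Fin n) (Fin n) ℝ) + P * Φ)⁻¹ * P * A := rfl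
  have hrp : rplus = (Aᵀ * ((1 : Matrix (Fin n) (Fin n) ℝ) + P * Φ)⁻¹) *ᵥ (r + P *ᵥ what) := rfl
  have hc : c = ((2 : ℝ) • what - Φ *ᵥ r) ⬝ᵥ (((1 : Matrix (Fin n) (Fin n) ℝ) + P * Φ)⁻¹ *ᵥ r)
      + what ⬝ᵥ ((((1 : Matrix (Fin n) (Fin n) ℝ) + P * Φ)⁻¹ * P) *ᵥ what) := rfl
  have hfd : ∀ u w, f u w = xbar ⬝ᵥ (Q *ᵥ xbar) + u ⬝ᵥ (R *ᵥ u)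
        + (A *ᵥ xbar + B *ᵥ u + w) ⬝ᵥ (P *ᵥ (A *ᵥ xbar + B *ᵥ u + w))
        + 2 * (r ⬝ᵥ (A *ᵥ xbar + B *ᵥ u + w))
        - lam * ((w - what) ⬝ᵥ (w - what)) := fun u w => rfl
  have hdet : IsUnit ((1 : Matrix (Fin n) (Fin n) ℝ) + P * Φ).det := by
    rw [hΦ]; exact SaddleAux.unit_det lam hlam P hP hPlam R hR B
  obtain ⟨N, hNdef⟩ : ∃ N', N' = ((1 : Matrix (Fin n) (Fin n) ℝ) + P * Φ)⁻¹ := ⟨_, rfl⟩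
  rw [← hNdef] at hK hL hPp hrp hc
  have hNr : ((1 : Matrix (Fin n) (Fin n) ℝ) + P * Φ) * N = 1 := by
    rw [hNdef]; exact mul_nonsing_inv _ hdet
  have hNl : N * ((1 : Matrix (Fin n) (Fin n) ℝ) + P * Φ) = 1 := by
    rw [hNdef]; exact nonsing_inv_mul _ hdet
  have hPT : Pᵀ = P := by rw [← conjTranspose_eq_transpose_of_trivial]; exact hP.1
  have hRT : Rᵀ = R := by rw [← conjTranspose_eq_transpose_of_trivial]; exact hR.1
  have hRiT : (R⁻¹)ᵀ = R⁻¹ := by rw [transpose_nonsing_inv, hRT]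
  have hΦT : Φᵀ = Φ := by
    rw [hΦ]
    simp only [transpose_sub, transpose_smul, transpose_one, transpose_mul,
      transpose_transpose, hRiT, Matrix.mul_assoc]
  have hTd : (1 : Matrix (Fin n) (Fin n) ℝ) + Φ * P
      = ((1 : Matrix (Fin n) (Fin n) ℝ) + P * Φ)ᵀ := by
    rw [transpose_add, transpose_one, transpose_mul, hPT, hΦT]
  have hdetT : IsUnit ((1 : Matrix (Fin n) (Fin n) ℝ) + Φ * P).det := by
    rw [hTd, det_transpose]; exact hdet
  have hNT : Nᵀ = ((1 : Matrix (Fin n) (Fin n) ℝ) + Φ * P)⁻¹ := by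
    rw [hNdef, transpose_nonsing_inv, ← hTd]
  have hNP : N * P = P * Nᵀ := by
    have h1 : P * ((1 : Matrix (Fin n) (Fin n) ℝ) + Φ * P)
        = ((1 : Matrix (Fin n) (Fin n) ℝ) + P * Φ) * P := by noncomm_ring
    have h2 : N * P * (((1 : Matrix (Fin n) (Fin n) ℝ) + Φ * P)
        * ((1 : Matrix (Fin n) (Fin n) ℝ) + Φ * P)⁻¹) = N * P := by
      rw [mul_nonsing_inv _ hdetT, mul_one]
    calc N * P = N * (P * ((1 : Matrix (Fin n) (Fin n) ℝ) + Φ * P))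
          * ((1 : Matrix (Fin n) (Fin n) ℝ) + Φ * P)⁻¹ := by
          rw [← h2]; simp only [Matrix.mul_assoc]
    _ = N * (((1 : Matrix (Fin n) (Fin n) ℝ) + P * Φ) * P)
          * ((1 : Matrix (Fin n) (Fin n) ℝ) + Φ * P)⁻¹ := by rw [h1]
    _ = P * Nᵀ := by rw [← Matrix.mul_assoc, hNl, one_mul, hNT]
  have hNPT : (N * P)ᵀ = N * P := by rw [transpose_mul, hPT, ← hNP]
  have hNPΦ : N * (P * Φ) = 1 - N := by
    have h3 := hNl
    rw [Matrix.mul_add, mul_one] at h3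
    exact eq_sub_of_add_eq' h3
  have hΦNP : Φ * (N * P) = 1 - Nᵀ := by
    have h4 := congrArg Matrix.transpose hNPΦ
    rw [transpose_mul, transpose_mul, hPT, hΦT, transpose_sub, transpose_one] at h4
    rw [hNP, ← Matrix.mul_assoc]
    exact h4
  have hVdet : IsUnit (lam • (1 : Matrix (Fin n) (Fin n) ℝ) - P).det :=
    isUnit_iff_ne_zero.mpr hPlam.det_pos.ne'
  obtain ⟨g, hgdef⟩ : ∃ g', g' = A *ᵥ xbar + what := ⟨_, rfl⟩
  obtain ⟨t, htdef⟩ : ∃ t', t' = N *ᵥ (P *ᵥ g + r) := ⟨_, rfl⟩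
  have hkey : (P * Φ) *ᵥ t = P *ᵥ g + r - t := by
    have h5 : ((1 : Matrix (Fin n) (Fin n) ℝ) + P * Φ) *ᵥ t = P *ᵥ g + r := by
      rw [htdef, mulVec_mulVec, hNr, one_mulVec]
    rw [add_mulVec, one_mulVec] at h5
    exact eq_sub_of_add_eq' h5
  have hU : ustar = -((R⁻¹ * Bᵀ) *ᵥ t) := by
    rw [hust, hK, hL, htdef, hgdef]
    simp only [Matrix.neg_mulVec, ← Matrix.mulVec_mulVec, Matrix.mulVec_add]
    abel
  have hBu : B *ᵥ (K *ᵥ xbar) + B *ᵥ L = -((B * (R⁻¹ * Bᵀ)) *ᵥ t) := by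
    have h6 : B *ᵥ ustar = B *ᵥ -((R⁻¹ * Bᵀ) *ᵥ t) := by rw [hU]
    rw [hust, mulVec_add] at h6
    rw [h6, mulVec_neg, mulVec_mulVec]
  have hW : wstar = what + lam⁻¹ • t := by
    rw [hwst, hH, hGd]
    have step1 : ((lam • (1 : Matrix (Fin n) (Fin n) ℝ) - P)⁻¹ * P * (A + B * K)) *ᵥ xbar
        + (lam • (1 : Matrix (Fin n) (Fin n) ℝ) - P)⁻¹ *ᵥ ((P * B) *ᵥ L + r + lam • what)
        = (lam • (1 : Matrix (Fin n) (Fin n) ℝ) - P)⁻¹ *ᵥ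
          (P *ᵥ (A *ᵥ xbar + (B *ᵥ (K *ᵥ xbar) + B *ᵥ L)) + r + lam • what) := by
      simp only [← Matrix.mulVec_mulVec, Matrix.add_mulVec, Matrix.mulVec_add]
      abel
    rw [step1, hBu]
    have h8 : P * Φ = P * (B * (R⁻¹ * Bᵀ)) - lam⁻¹ • P := by
      rw [hΦ, Matrix.mul_sub, mul_smul_comm, mul_one]
      simp only [Matrix.mul_assoc]
    have h7 : (P * (B * (R⁻¹ * Bᵀ))) *ᵥ t = P *ᵥ g + r - t + lam⁻¹ • (P *ᵥ t) := by
      have h9 := hkey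
      rw [h8, Matrix.sub_mulVec, smul_mulVec] at h9
      rw [sub_eq_iff_eq_add] at h9
      exact h9
    have step2 : P *ᵥ (A *ᵥ xbar + -((B * (R⁻¹ * Bᵀ)) *ᵥ t)) + r + lam • what
        = (lam • (1 : Matrix (Fin n) (Fin n) ℝ) - P) *ᵥ (what + lam⁻¹ • t) := by
      simp only [Matrix.mulVec_add, Matrix.mulVec_neg, Matrix.mulVec_mulVec]
      rw [h7, hgdef]
      simp only [Matrix.sub_mulVec, smul_mulVec, one_mulVec, Matrix.mulVec_add,
        Matrix.mulVec_smul, smul_add, smul_sub, smul_smul, mul_inv_cancel₀ hlam.ne',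
        inv_mul_cancel₀ hlam.ne', one_smul, Matrix.mulVec_mulVec]
      abel
    rw [step2, mulVec_mulVec, nonsing_inv_mul _ hVdet, one_mulVec]
  have hws : wstar - what = lam⁻¹ • t := by rw [hW]; exact add_sub_cancel_left _ _
  have hZ : A *ᵥ xbar + B *ᵥ ustar + wstar = g - Φ *ᵥ t := by
    rw [hU, hW, hΦ, hgdef]
    simp only [Matrix.mulVec_neg, Matrix.mulVec_mulVec, Matrix.sub_mulVec,
      smul_mulVec, one_mulVec, ← Matrix.mul_assoc]
    abel
  have hRu : ustar ⬝ᵥ (R *ᵥ ustar) = t ⬝ᵥ ((B * R⁻¹ * Bᵀ) *ᵥ t) := by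
    rw [hU, mulVec_neg, dotProduct_neg, neg_dotProduct, neg_neg, mulVec_mulVec,
      ← Matrix.mul_assoc, mul_nonsing_inv _ (isUnit_iff_ne_zero.mpr hR.det_pos.ne'), Matrix.one_mul,
      dot_swap Bᵀ, transpose_transpose, mulVec_mulVec, dotProduct_comm, ← Matrix.mul_assoc]
  -- the saddle value in terms of g and t
  have hsv : f ustar wstar = xbar ⬝ᵥ (Q *ᵥ xbar) + r ⬝ᵥ g + g ⬝ᵥ t - r ⬝ᵥ (Φ *ᵥ t) := by
    rw [hfd, hZ, hRu, hws]
    have s1 : P *ᵥ (Φ *ᵥ t) = P *ᵥ g + r - t := by rw [mulVec_mulVec]; exact hkey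
    have c4 : lam * ((lam⁻¹ • t) ⬝ᵥ (lam⁻¹ • t)) = lam⁻¹ * (t ⬝ᵥ t) := by
      rw [smul_dotProduct, dotProduct_smul, smul_eq_mul, smul_eq_mul]
      field_simp
    have c5 : t ⬝ᵥ ((B * R⁻¹ * Bᵀ) *ᵥ t) = t ⬝ᵥ (Φ *ᵥ t) + lam⁻¹ * (t ⬝ᵥ t) := by
      rw [hΦ, Matrix.sub_mulVec, smul_mulVec, one_mulVec, dotProduct_sub,
        dotProduct_smul, smul_eq_mul]
      ring
    have c1 : g ⬝ᵥ (P *ᵥ (Φ *ᵥ t)) = g ⬝ᵥ (P *ᵥ g) + g ⬝ᵥ r - g ⬝ᵥ t := by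
      rw [s1, dotProduct_sub, dotProduct_add]
    have c2 : (Φ *ᵥ t) ⬝ᵥ (P *ᵥ g) = g ⬝ᵥ (P *ᵥ g) + r ⬝ᵥ g - t ⬝ᵥ g := by
      rw [dot_swap P, hPT, s1, sub_dotProduct, add_dotProduct,
        dotProduct_comm (P *ᵥ g) g]
    have c0 : (P *ᵥ g) ⬝ᵥ (Φ *ᵥ t) = g ⬝ᵥ (P *ᵥ g) + g ⬝ᵥ r - g ⬝ᵥ t := by
      have h10 := dot_swap P g (Φ *ᵥ t)
      rw [hPT] at h10
      rw [← h10, c1]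
    have c3 : (Φ *ᵥ t) ⬝ᵥ (P *ᵥ (Φ *ᵥ t))
        = g ⬝ᵥ (P *ᵥ g) + g ⬝ᵥ r - g ⬝ᵥ t + r ⬝ᵥ (Φ *ᵥ t) - t ⬝ᵥ (Φ *ᵥ t) := by
      rw [dot_swap P, hPT, s1, sub_dotProduct, add_dotProduct, c0]
    simp only [Matrix.mulVec_sub, dotProduct_sub, sub_dotProduct]
    rw [c5, c1, c2, c3, c4]
    linarith [dotProduct_comm t g, dotProduct_comm g r]
  -- the target in terms of g and t
  have d1 : g ⬝ᵥ t = g ⬝ᵥ ((N * P) *ᵥ g) + g ⬝ᵥ (N *ᵥ r) := by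
    rw [htdef, Matrix.mulVec_add, dotProduct_add, Matrix.mulVec_mulVec]
  have d2 : r ⬝ᵥ (Φ *ᵥ t) = r ⬝ᵥ g - g ⬝ᵥ (N *ᵥ r) + r ⬝ᵥ (Φ *ᵥ (N *ᵥ r)) := by
    rw [htdef, Matrix.mulVec_add, Matrix.mulVec_mulVec, Matrix.mulVec_add, dotProduct_add,
      Matrix.mulVec_mulVec, hΦNP, Matrix.sub_mulVec, one_mulVec, dotProduct_sub]
    have h11 := dot_swap Nᵀ r g
    rw [transpose_transpose] at h11
    rw [h11, dotProduct_comm (N *ᵥ r) g]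
  have d3 : what ⬝ᵥ ((N * P) *ᵥ (A *ᵥ xbar)) = (A *ᵥ xbar) ⬝ᵥ ((N * P) *ᵥ what) := by
    rw [dot_swap (N * P), hNPT, dotProduct_comm]
  have e1 : xbar ⬝ᵥ (Pplus *ᵥ xbar)
      = xbar ⬝ᵥ (Q *ᵥ xbar) + (A *ᵥ xbar) ⬝ᵥ ((N * P) *ᵥ (A *ᵥ xbar)) := by
    rw [hPp, Matrix.add_mulVec, dotProduct_add]
    congr 1
    rw [show Aᵀ * N * P * A = Aᵀ * ((N * P) * A) by simp only [Matrix.mul_assoc],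
      ← Matrix.mulVec_mulVec, dot_swap Aᵀ, transpose_transpose, ← Matrix.mulVec_mulVec]
  have e2 : rplus ⬝ᵥ xbar
      = (A *ᵥ xbar) ⬝ᵥ (N *ᵥ r) + (A *ᵥ xbar) ⬝ᵥ ((N * P) *ᵥ what) := by
    rw [hrp, dotProduct_comm, ← Matrix.mulVec_mulVec, dot_swap Aᵀ, transpose_transpose,
      Matrix.mulVec_add, dotProduct_add, Matrix.mulVec_mulVec]
  have e3 : c = 2 * (what ⬝ᵥ (N *ᵥ r)) - r ⬝ᵥ (Φ *ᵥ (N *ᵥ r))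
      + what ⬝ᵥ ((N * P) *ᵥ what) := by
    rw [hc, sub_dotProduct, smul_dotProduct, smul_eq_mul]
    have h12 := dot_swap Φ r (N *ᵥ r)
    rw [hΦT] at h12
    rw [h12, ← Matrix.mulVec_mulVec]
  have expand1 : g ⬝ᵥ ((N * P) *ᵥ g)
      = (A *ᵥ xbar) ⬝ᵥ ((N * P) *ᵥ (A *ᵥ xbar)) + 2 * ((A *ᵥ xbar) ⬝ᵥ ((N * P) *ᵥ what))
        + what ⬝ᵥ ((N * P) *ᵥ what) := by
    rw [hgdef, add_dotProduct, Matrix.mulVec_add, dotProduct_add, dotProduct_add, d3]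
    ring
  have expand2 : g ⬝ᵥ (N *ᵥ r) = (A *ᵥ xbar) ⬝ᵥ (N *ᵥ r) + what ⬝ᵥ (N *ᵥ r) := by
    rw [hgdef, add_dotProduct]
  rw [hsv, e1, e2, e3, d1, d2, expand1, expand2]
  ring
end

section
/- Let Θ be an n×n real symmetric positive semidefinite matrix and C ∈ ℝ^{p×n}. Then the function (Σ, V) ↦ Tr[Θ (Σ − Σ Cᵀ (C Σ Cᵀ + V)⁻¹ C Σ)] is jointly concave on the set of pairs (Σ, V) with Σ an n×n symmetric positive semidefinite matrix and V a p×p symmetric positive definite matrix. -/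
open Matrix

section KalmanAux

private lemma psd_smul' {k : ℕ} {A : Matrix (Fin k) (Fin k) ℝ} (hA : A.PosSemidef) {c : ℝ}
    (hc : 0 ≤ c) : (c • A).PosSemidef := by
  refine ⟨?_, fun x => ?_⟩
  · unfold Matrix.IsHermitian
    rw [conjTranspose_smul, hA.1]
    simp
  · exact (hA.smul hc).2 x

private lemma pd_smul' {k : ℕ} {A : Matrix (Fin k) (Fin k) ℝ} (hA : A.PosDef) {c : ℝ}
    (hc : 0 < c) : (c • A).PosDef := by
  refine ⟨?_, fun x hx => ?_⟩
  · unfold Matrix.IsHermitian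
    rw [conjTranspose_smul, hA.1]
    simp
  · exact (hA.smul hc).2 hx

private lemma trace_psd_nonneg' {k : ℕ} {M : Matrix (Fin k) (Fin k) ℝ} (hM : M.PosSemidef) :
    0 ≤ M.trace := by
  rw [Matrix.trace]
  refine Finset.sum_nonneg fun i _ => ?_
  simpa using hM.2 (Finsupp.single i 1)

open scoped MatrixOrder in
private lemma trace_mul_psd_nonneg' {k : ℕ} {A B : Matrix (Fin k) (Fin k) ℝ}
    (hA : A.PosSemidef) (hB : B.PosSemidef) : 0 ≤ (A * B).trace := by
  have hS : B = CFC.sqrt B * CFC.sqrt B := (CFC.sqrt_mul_sqrt_self B hB.nonneg).symm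
  have h1 : (CFC.sqrt B * A * CFC.sqrt B).trace = (A * B).trace := by
    rw [Matrix.mul_assoc, Matrix.trace_mul_comm, Matrix.mul_assoc, ← hS]
  rw [← h1]
  have := hA.conjTranspose_mul_mul_same (CFC.sqrt B)
  rw [(CFC.sqrt_nonneg B).posSemidef.1] at this
  exact trace_psd_nonneg' this

private lemma kalman_key_id {n p : ℕ} (C : Matrix (Fin p) (Fin n) ℝ)
    (S : Matrix (Fin n) (Fin n) ℝ) (V : Matrix (Fin p) (Fin p) ℝ)
    (X : Matrix (Fin p) (Fin n) ℝ)
    (hS : Sᵀ = S) (hDsym : (C*S*Cᵀ+V)ᵀ = C*S*Cᵀ+V) (hD : IsUnit (C*S*Cᵀ+V).det) :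
    S - S*Cᵀ*X - Xᵀ*(C*S) + Xᵀ*(C*S*Cᵀ+V)*X
      = (S - S*Cᵀ*(C*S*Cᵀ+V)⁻¹*C*S)
        + (X - (C*S*Cᵀ+V)⁻¹*(C*S))ᵀ*(C*S*Cᵀ+V)*(X - (C*S*Cᵀ+V)⁻¹*(C*S)) := by
  set D := C*S*Cᵀ+V with hDdef
  set X₀ := D⁻¹*(C*S) with hX0
  have hX0t : X₀ᵀ = S*Cᵀ*D⁻¹ := by
    rw [hX0, transpose_mul, transpose_nonsing_inv, hDsym, transpose_mul, hS, Matrix.mul_assoc]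
  have h1 : D * X₀ = C*S := by
    rw [hX0, ← Matrix.mul_assoc, mul_nonsing_inv _ hD, Matrix.one_mul]
  have h2 : X₀ᵀ * D = S*Cᵀ := by
    rw [hX0t, Matrix.mul_assoc, nonsing_inv_mul _ hD, Matrix.mul_one]
  have h3 : S*Cᵀ*X₀ = S*Cᵀ*D⁻¹*C*S := by
    rw [hX0, ← Matrix.mul_assoc, ← Matrix.mul_assoc]
  have expand : (X - X₀)ᵀ * D * (X - X₀)
      = Xᵀ*D*X - Xᵀ*(C*S) - S*Cᵀ*X + S*Cᵀ*D⁻¹*C*S := by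
    rw [transpose_sub, Matrix.sub_mul, Matrix.sub_mul, Matrix.mul_sub, Matrix.mul_sub,
      Matrix.mul_assoc Xᵀ D X₀, h1, h2, h3]
    abel
  rw [expand]
  abel

private lemma kalman_g_lin {n p : ℕ} (Θ : Matrix (Fin n) (Fin n) ℝ)
    (C : Matrix (Fin p) (Fin n) ℝ) (X : Matrix (Fin p) (Fin n) ℝ)
    (S₁ S₂ : Matrix (Fin n) (Fin n) ℝ) (V₁ V₂ : Matrix (Fin p) (Fin p) ℝ) (a b : ℝ) :
    (Θ * ((a•S₁+b•S₂) - (a•S₁+b•S₂)*Cᵀ*X - Xᵀ*(C*(a•S₁+b•S₂))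
        + Xᵀ*(C*(a•S₁+b•S₂)*Cᵀ + (a•V₁+b•V₂))*X)).trace
      = a * (Θ * (S₁ - S₁*Cᵀ*X - Xᵀ*(C*S₁) + Xᵀ*(C*S₁*Cᵀ+V₁)*X)).trace
        + b * (Θ * (S₂ - S₂*Cᵀ*X - Xᵀ*(C*S₂) + Xᵀ*(C*S₂*Cᵀ+V₂)*X)).trace := by
  simp only [Matrix.add_mul, Matrix.mul_add, Matrix.smul_mul, Matrix.mul_smul,
    Matrix.mul_sub, Matrix.sub_mul, sub_eq_add_neg, neg_add, Matrix.mul_add,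
    trace_add, trace_smul, trace_neg, smul_eq_mul, Matrix.neg_mul, Matrix.mul_neg,
    smul_add, smul_neg, smul_smul]
  ring

/-- The value of the Kalman objective is bounded above by the affine majorant at any `X`. -/
private lemma kalman_f_le_g {n p : ℕ} {Θ : Matrix (Fin n) (Fin n) ℝ} (hΘ : Θ.PosSemidef)
    (C : Matrix (Fin p) (Fin n) ℝ) {S : Matrix (Fin n) (Fin n) ℝ}
    {V : Matrix (Fin p) (Fin p) ℝ} (hS : S.PosSemidef) (hD : (C*S*Cᵀ+V).PosDef)
    (X : Matrix (Fin p) (Fin n) ℝ) :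
    (Θ * (S - S*Cᵀ*(C*S*Cᵀ+V)⁻¹*C*S)).trace
      ≤ (Θ * (S - S*Cᵀ*X - Xᵀ*(C*S) + Xᵀ*(C*S*Cᵀ+V)*X)).trace := by
  have hSt : Sᵀ = S := (conjTranspose_eq_transpose_of_trivial S).symm.trans hS.1
  have hDsym : (C*S*Cᵀ+V)ᵀ = C*S*Cᵀ+V :=
    (conjTranspose_eq_transpose_of_trivial _).symm.trans hD.1
  have hDu : IsUnit (C*S*Cᵀ+V).det := hD.isUnit.map (Matrix.detMonoidHom)
  rw [kalman_key_id C S V X hSt hDsym hDu, Matrix.mul_add, trace_add]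
  refine le_add_of_nonneg_right ?_
  have hpsd := hD.posSemidef.conjTranspose_mul_mul_same (X - (C*S*Cᵀ+V)⁻¹*(C*S))
  rw [conjTranspose_eq_transpose_of_trivial] at hpsd
  exact trace_mul_psd_nonneg' hΘ hpsd

/-- At the optimal `X₀` the affine majorant equals the Kalman objective. -/
private lemma kalman_f_eq_g {n p : ℕ} (Θ : Matrix (Fin n) (Fin n) ℝ)
    (C : Matrix (Fin p) (Fin n) ℝ) {S : Matrix (Fin n) (Fin n) ℝ}
    {V : Matrix (Fin p) (Fin p) ℝ} (hS : S.PosSemidef) (hD : (C*S*Cᵀ+V).PosDef) :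
    (Θ * (S - S*Cᵀ*(C*S*Cᵀ+V)⁻¹*C*S)).trace
      = (Θ * (S - S*Cᵀ*((C*S*Cᵀ+V)⁻¹*(C*S)) - ((C*S*Cᵀ+V)⁻¹*(C*S))ᵀ*(C*S)
          + ((C*S*Cᵀ+V)⁻¹*(C*S))ᵀ*(C*S*Cᵀ+V)*((C*S*Cᵀ+V)⁻¹*(C*S)))).trace := by
  have hSt : Sᵀ = S := (conjTranspose_eq_transpose_of_trivial S).symm.trans hS.1
  have hDsym : (C*S*Cᵀ+V)ᵀ = C*S*Cᵀ+V :=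
    (conjTranspose_eq_transpose_of_trivial _).symm.trans hD.1
  have hDu : IsUnit (C*S*Cᵀ+V).det := hD.isUnit.map (Matrix.detMonoidHom)
  rw [kalman_key_id C S V ((C*S*Cᵀ+V)⁻¹*(C*S)) hSt hDsym hDu]
  simp

end KalmanAux

/-- joint concavity of the weighted Kalman posterior-covariance trace
`(Σ, V) ↦ Tr[Θ(Σ − ΣCᵀ(CΣCᵀ + V)⁻¹CΣ)]` over pairs of a PSD prior covariance and a
PD noise covariance. -/
theorem kalman_posterior_trace_concave {n p : ℕ}
    (Θ : Matrix (Fin n) (Fin n) ℝ) (hΘ : Θ.PosSemidef)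
    (C : Matrix (Fin p) (Fin n) ℝ) :
    ConcaveOn ℝ
      {q : Matrix (Fin n) (Fin n) ℝ × Matrix (Fin p) (Fin p) ℝ |
        q.1.PosSemidef ∧ q.2.PosDef}
      (fun q => (Θ * (q.1 - q.1 * Cᵀ * (C * q.1 * Cᵀ + q.2)⁻¹ * C * q.1)).trace) := by
  have hVcombo : ∀ (q r : Matrix (Fin n) (Fin n) ℝ × Matrix (Fin p) (Fin p) ℝ),
      q ∈ {q : Matrix (Fin n) (Fin n) ℝ × Matrix (Fin p) (Fin p) ℝ |
        q.1.PosSemidef ∧ q.2.PosDef} →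
      r ∈ {q : Matrix (Fin n) (Fin n) ℝ × Matrix (Fin p) (Fin p) ℝ |
        q.1.PosSemidef ∧ q.2.PosDef} →
      ∀ a b : ℝ, 0 ≤ a → 0 ≤ b → a + b = 1 →
        (a • q.1 + b • r.1).PosSemidef ∧ (a • q.2 + b • r.2).PosDef := by
    rintro q r ⟨hq1, hq2⟩ ⟨hr1, hr2⟩ a b ha hb hab
    refine ⟨(psd_smul' hq1 ha).add (psd_smul' hr1 hb), ?_⟩
    rcases ha.eq_or_lt with h | h
    · have hb1 : b = 1 := by linarith
      have : a • q.2 + b • r.2 = r.2 := by rw [← h, hb1]; simp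
      rw [this]; exact hr2
    · exact (pd_smul' hq2 h).add_posSemidef (psd_smul' hr2.posSemidef hb)
  have hDpd : ∀ (S : Matrix (Fin n) (Fin n) ℝ) (V : Matrix (Fin p) (Fin p) ℝ),
      S.PosSemidef → V.PosDef → (C * S * Cᵀ + V).PosDef := by
    intro S V hS hV
    have h1 := hS.mul_mul_conjTranspose_same C
    rw [conjTranspose_eq_transpose_of_trivial] at h1
    exact Matrix.PosDef.posSemidef_add h1 hV
  constructor
  · rintro q hq r hr a b ha hb hab
    exact hVcombo q r hq hr a b ha hb hab
  · rintro q hq r hr a b ha hb hab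
    obtain ⟨hS, hV⟩ := hVcombo q r hq hr a b ha hb hab
    obtain ⟨hq1, hq2⟩ := hq
    obtain ⟨hr1, hr2⟩ := hr
    simp only [smul_eq_mul, Prod.fst_add, Prod.smul_fst, Prod.snd_add, Prod.smul_snd]
    set S := a • q.1 + b • r.1 with hSdef
    set V := a • q.2 + b • r.2 with hVdef
    set X₀ := (C*S*Cᵀ+V)⁻¹*(C*S) with hX0def
    have hDc := hDpd S V hS hV
    have hDq := hDpd q.1 q.2 hq1 hq2
    have hDr := hDpd r.1 r.2 hr1 hr2
    have heq := kalman_f_eq_g Θ C hS hDc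
    have hlin := kalman_g_lin Θ C X₀ q.1 r.1 q.2 r.2 a b
    have hle1 := kalman_f_le_g hΘ C hq1 hDq X₀
    have hle2 := kalman_f_le_g hΘ C hr1 hDr X₀
    calc a * (Θ * (q.1 - q.1*Cᵀ*(C*q.1*Cᵀ + q.2)⁻¹*C*q.1)).trace
          + b * (Θ * (r.1 - r.1*Cᵀ*(C*r.1*Cᵀ + r.2)⁻¹*C*r.1)).trace
        ≤ a * (Θ * (q.1 - q.1*Cᵀ*X₀ - X₀ᵀ*(C*q.1) + X₀ᵀ*(C*q.1*Cᵀ+q.2)*X₀)).trace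
          + b * (Θ * (r.1 - r.1*Cᵀ*X₀ - X₀ᵀ*(C*r.1) + X₀ᵀ*(C*r.1*Cᵀ+r.2)*X₀)).trace := by
          exact add_le_add (mul_le_mul_of_nonneg_left hle1 ha)
            (mul_le_mul_of_nonneg_left hle2 hb)
      _ = (Θ * (S - S*Cᵀ*X₀ - X₀ᵀ*(C*S) + X₀ᵀ*(C*S*Cᵀ+V)*X₀)).trace := hlin.symm
      _ = (Θ * (S - S*Cᵀ*(C*S*Cᵀ+V)⁻¹*C*S)).trace := by
          rw [heq]
end

section
/- Let Σ be an n×n real symmetric positive semidefinite matrix, C ∈ ℝ^{p×n}, and let V₁, V₂ be p×p symmetric positive definite matrices with V₁ ⪯ V₂. Then Σ − Σ Cᵀ (C Σ Cᵀ + V₁)⁻¹ C Σ ⪯ Σ − Σ Cᵀ (C Σ Cᵀ + V₂)⁻¹ C Σ; consequently, for every n×n symmetric positive semidefinite Θ, Tr[Θ (Σ − Σ Cᵀ (C Σ Cᵀ + V₁)⁻¹ C Σ)] ≤ Tr[Θ (Σ − Σ Cᵀ (C Σ Cᵀ + V₂)⁻¹ C Σ)]. -/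
open Matrix

lemma psd_trace_nonneg {m : ℕ} {M : Matrix (Fin m) (Fin m) ℝ} (hM : M.PosSemidef) :
    0 ≤ M.trace := by
  rw [Matrix.trace]
  apply Finset.sum_nonneg
  intro i _
  have := hM.2 (Finsupp.single i 1)
  simpa [dotProduct, Matrix.mulVec, Pi.single_apply, Matrix.diag] using this

lemma inv_antitone {m : ℕ} {A B : Matrix (Fin m) (Fin m) ℝ}
    (hA : A.PosDef) (hB : B.PosDef) (hAB : (B - A).PosSemidef) :
    (A⁻¹ - B⁻¹).PosSemidef := by
  letI := hA.isUnit.invertible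
  letI := hB.isUnit.invertible
  set D := B - A with hD
  have key : A⁻¹ - B⁻¹ = B⁻¹ * D * A⁻¹ * D * B⁻¹ + B⁻¹ * D * B⁻¹ := by
    have h1 : B⁻¹ * D * A⁻¹ = A⁻¹ - B⁻¹ := by
      simp [hD, Matrix.mul_sub, Matrix.sub_mul, Matrix.mul_assoc]
    calc A⁻¹ - B⁻¹ = (A⁻¹ - B⁻¹) * D * B⁻¹ + B⁻¹ * D * B⁻¹ := by
          simp [hD, Matrix.mul_sub, Matrix.sub_mul, Matrix.mul_assoc]
      _ = B⁻¹ * D * A⁻¹ * D * B⁻¹ + B⁻¹ * D * B⁻¹ := by rw [h1]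
  rw [key]
  have hBi : (B⁻¹)ᴴ = B⁻¹ := hB.inv.isHermitian
  have hDh : Dᴴ = D := hAB.isHermitian
  refine Matrix.PosSemidef.add ?_ ?_
  · have : B⁻¹ * D * A⁻¹ * D * B⁻¹ = (D * B⁻¹)ᴴ * A⁻¹ * (D * B⁻¹) := by
      rw [Matrix.conjTranspose_mul, hBi, hDh]; noncomm_ring
    rw [this]
    exact hA.inv.posSemidef.conjTranspose_mul_mul_same _
  · have : B⁻¹ * D * B⁻¹ = (B⁻¹)ᴴ * D * B⁻¹ := by rw [hBi]
    rw [this]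
    exact hAB.conjTranspose_mul_mul_same _

/-- monotonicity of the Kalman posterior covariance in the
measurement-noise covariance, and the resulting trace monotonicity. -/
theorem kalman_posterior_monotone {n p : ℕ}
    (Sig : Matrix (Fin n) (Fin n) ℝ) (hSig : Sig.PosSemidef)
    (C : Matrix (Fin p) (Fin n) ℝ)
    (V1 V2 : Matrix (Fin p) (Fin p) ℝ) (hV1 : V1.PosDef) (hV2 : V2.PosDef)
    (hV12 : (V2 - V1).PosSemidef) :
    ((Sig - Sig * Cᵀ * (C * Sig * Cᵀ + V2)⁻¹ * C * Sig)
      - (Sig - Sig * Cᵀ * (C * Sig * Cᵀ + V1)⁻¹ * C * Sig)).PosSemidef ∧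
    ∀ Θ : Matrix (Fin n) (Fin n) ℝ, Θ.PosSemidef →
      (Θ * (Sig - Sig * Cᵀ * (C * Sig * Cᵀ + V1)⁻¹ * C * Sig)).trace ≤
      (Θ * (Sig - Sig * Cᵀ * (C * Sig * Cᵀ + V2)⁻¹ * C * Sig)).trace := by
  have hCt : Cᴴ = Cᵀ := by ext i j; simp
  have hS : (C * Sig * Cᵀ).PosSemidef := by
    rw [← hCt]; exact hSig.mul_mul_conjTranspose_same C
  have hA : (C * Sig * Cᵀ + V1).PosDef := Matrix.PosDef.posSemidef_add hS hV1
  have hB : (C * Sig * Cᵀ + V2).PosDef := Matrix.PosDef.posSemidef_add hS hV2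
  have hdiff : ((C * Sig * Cᵀ + V2) - (C * Sig * Cᵀ + V1)).PosSemidef := by
    have : (C * Sig * Cᵀ + V2) - (C * Sig * Cᵀ + V1) = V2 - V1 := by abel
    rw [this]; exact hV12
  have hinv := inv_antitone hA hB hdiff
  have hST : Sigᴴ = Sig := hSig.isHermitian
  have hmain :
      ((Sig - Sig * Cᵀ * (C * Sig * Cᵀ + V2)⁻¹ * C * Sig)
      - (Sig - Sig * Cᵀ * (C * Sig * Cᵀ + V1)⁻¹ * C * Sig)).PosSemidef := by
    have heq : (Sig - Sig * Cᵀ * (C * Sig * Cᵀ + V2)⁻¹ * C * Sig)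
        - (Sig - Sig * Cᵀ * (C * Sig * Cᵀ + V1)⁻¹ * C * Sig)
        = (C * Sig)ᴴ * ((C * Sig * Cᵀ + V1)⁻¹ - (C * Sig * Cᵀ + V2)⁻¹) * (C * Sig) := by
      rw [Matrix.conjTranspose_mul, hCt, hST]
      simp only [Matrix.mul_sub, Matrix.sub_mul, Matrix.mul_assoc]
      abel
    rw [heq]
    exact hinv.conjTranspose_mul_mul_same _
  refine ⟨hmain, fun Θ hΘ => ?_⟩
  rw [← sub_nonneg, ← Matrix.trace_sub, ← Matrix.mul_sub]
  obtain ⟨X, hX⟩ : ∃ X : Matrix (Fin n) (Fin n) ℝ, Θ = Xᴴ * X := by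
    open scoped MatrixOrder in
    exact CStarAlgebra.nonneg_iff_eq_star_mul_self.mp hΘ.nonneg
  rw [hX, Matrix.mul_assoc, Matrix.trace_mul_comm]
  exact psd_trace_nonneg (hmain.mul_mul_conjTranspose_same X)
end

section
/- Let S and Σ be n×n real symmetric positive semidefinite matrices, V a p×p symmetric positive definite matrix, and C ∈ ℝ^{p×n}. Consider the problem of maximizing Tr[S X] over all n×n symmetric matrices X such that the block matrix [[Σ − X, Σ Cᵀ], [C Σ, C Σ Cᵀ + V]] is positive semidefinite. Then the maximum is attained at X* := Σ − Σ Cᵀ (C Σ Cᵀ + V)⁻¹ C Σ, and the optimal value equals Tr[S (Σ − Σ Cᵀ (C Σ Cᵀ + V)⁻¹ C Σ)]. -/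
open Matrix

private lemma trace_nonneg_of_psd {n : ℕ} {A : Matrix (Fin n) (Fin n) ℝ}
    (hA : A.PosSemidef) : 0 ≤ A.trace := by
  rw [Matrix.trace]
  apply Finset.sum_nonneg
  intro i _
  have := hA.diag_nonneg (i := i)
  simpa [Matrix.mulVec_single, dotProduct, Pi.single_apply, Finset.sum_ite_eq',
    Matrix.diag] using this

open scoped MatrixOrder in
private lemma trace_mul_nonneg_of_psd {n : ℕ} {A B : Matrix (Fin n) (Fin n) ℝ}
    (hA : A.PosSemidef) (hB : B.PosSemidef) : 0 ≤ (A * B).trace := by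
  obtain ⟨R, hR⟩ := CStarAlgebra.nonneg_iff_eq_star_mul_self.mp hA.nonneg
  have h1 : (A * B).trace = (R * B * Rᴴ).trace := by
    rw [hR, Matrix.star_eq_conjTranspose, Matrix.mul_assoc, Matrix.trace_mul_comm]
  rw [h1]
  exact trace_nonneg_of_psd (hB.mul_mul_conjTranspose_same _)

/-- maximizing `Tr[SX]` over symmetric `X` with the Kalman
measurement-update LMI is attained at the Kalman posterior covariance
`X* = Σ − ΣCᵀ(CΣCᵀ + V)⁻¹CΣ`. -/
theorem sdp_tightness {n p : ℕ}
    (S : Matrix (Fin n) (Fin n) ℝ) (hS : S.PosSemidef)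
    (Sig : Matrix (Fin n) (Fin n) ℝ) (hSig : Sig.PosSemidef)
    (V : Matrix (Fin p) (Fin p) ℝ) (hV : V.PosDef)
    (C : Matrix (Fin p) (Fin n) ℝ) :
    IsGreatest
      {t : ℝ | ∃ X : Matrix (Fin n) (Fin n) ℝ, X.IsHermitian ∧
        (Matrix.fromBlocks (Sig - X) (Sig * Cᵀ) (C * Sig) (C * Sig * Cᵀ + V)).PosSemidef ∧
        t = (S * X).trace}
      ((S * (Sig - Sig * Cᵀ * (C * Sig * Cᵀ + V)⁻¹ * C * Sig)).trace) := by
  have hCT : Cᵀ = Cᴴ := (conjTranspose_eq_transpose_of_trivial C).symm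
  set M : Matrix (Fin p) (Fin p) ℝ := C * Sig * Cᵀ + V with hMdef
  have hMpsd : (C * Sig * Cᵀ).PosSemidef := by
    rw [hCT]
    simpa [Matrix.mul_assoc] using hSig.mul_mul_conjTranspose_same C
  have hM : M.PosDef := Matrix.PosDef.posSemidef_add hMpsd hV
  have hMherm : M⁻¹.IsHermitian := hM.isHermitian.inv
  haveI : Invertible M := hM.isUnit.invertible
  set Xs : Matrix (Fin n) (Fin n) ℝ := Sig - Sig * Cᵀ * M⁻¹ * C * Sig with hXs
  have hBH : (Sig * Cᵀ)ᴴ = C * Sig := by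
    rw [hCT, conjTranspose_mul, conjTranspose_conjTranspose, hSig.1.eq]
  have hdiff : Sig - Xs = Sig * Cᵀ * M⁻¹ * C * Sig := by simp [hXs]
  constructor
  · refine ⟨Xs, ?_, ?_, rfl⟩
    · show Xsᴴ = Xs
      rw [hXs, conjTranspose_sub, hSig.1.eq, hCT]
      congr 1
      simp only [conjTranspose_mul, conjTranspose_conjTranspose, hSig.1.eq, hMherm.eq,
        Matrix.mul_assoc]
    · have h0 : ((Sig - Xs) - Sig * Cᵀ * M⁻¹ * (Sig * Cᵀ)ᴴ).PosSemidef := by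
        rw [hBH, hdiff]
        simpa [Matrix.mul_assoc] using (Matrix.PosSemidef.zero :
          (0 : Matrix (Fin n) (Fin n) ℝ).PosSemidef)
      have := (Matrix.PosDef.fromBlocks₂₂ (Sig - Xs) (Sig * Cᵀ) hM).mpr h0
      rwa [hBH] at this
  · rintro t ⟨X, hXh, hblock, rfl⟩
    have hblock' : (fromBlocks (Sig - X) (Sig * Cᵀ) (Sig * Cᵀ)ᴴ M).PosSemidef := by
      rwa [hBH]
    have hschur := (Matrix.PosDef.fromBlocks₂₂ (Sig - X) (Sig * Cᵀ) hM).mp hblock'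
    rw [hBH] at hschur
    have hXsX : (Xs - X).PosSemidef := by
      have : Xs - X = Sig - X - Sig * (Cᵀ * (M⁻¹ * (C * Sig))) := by
        rw [hXs]; simp only [Matrix.mul_assoc]; abel
      rw [this]
      simpa [Matrix.mul_assoc] using hschur
    have h := trace_mul_nonneg_of_psd hS hXsX
    rw [Matrix.mul_sub, Matrix.trace_sub] at h
    linarith
end
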